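/- If a Schauder basis B of a Banach space X satisfies ‖x − G_m(x)‖ ≤ C·D*_m(x) for all x and m, then B has Property (Q*) with constant C. -/

import Mathlib

/-!
By convexity of the norm it suffices to treat `z = ε_Z`, a vector of signs on `Z = supp z`.
Pick `B ⊆ {n : |y n| = 1}` with `|B| = |Z|`, let `F = supp y`, and for `δ > 0` apply the greedy
bound to `v = c + ε_Z + w`, where `w = (1 + δ) y` on `B` and `w = y + sign y` on `F \ B`. The
coefficients of `v` exceed `1` in modulus exactly on `F`, so `F` is a greedy set of `v` and
`v - G_{|F|}(v) = c + ε_Z`; subtracting instead the sign vector `ε_Z + sign y` on `Z ∪ (F \ B)`, a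
set of size `|F|`, leaves `c + y + δ y_B`. Thus `‖c + ε_Z‖ ≤ C (‖c + y‖ + δ ‖y_B‖)`; let `δ → 0`.
-/
open Filter

/-- The vector with finitely many coefficients `c` with respect to the sequence `(e_n)`. -/
noncomputable def vec {X : Type*} [NormedAddCommGroup X] [NormedSpace ℝ X]
    (e : ℕ → X) (c : ℕ →₀ ℝ) : X := ∑ n ∈ c.support, c n • e n

/-- Property (Q*) with constant `C`. -/
def PropQstar {X : Type*} [NormedAddCommGroup X] [NormedSpace ℝ X] (e : ℕ → X) (C : ℝ) : Prop :=
  ∀ (c z y : ℕ →₀ ℝ), Disjoint c.support z.support → Disjoint c.support y.support →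
    Disjoint z.support y.support → (∀ n, |c n| ≤ 1) → (∀ n, |z n| ≤ 1) →
    z.support.card ≤ (y.support.filter fun n => |y n| = 1).card →
    ‖vec e c + vec e z‖ ≤ C * ‖vec e c + vec e y‖

/-- `Λ` is the set of indices of the `|Λ|` largest-in-modulus coefficients of `x`, ties
broken by smallest index (the natural greedy ordering). -/
def IsGreedySet {X : Type*} [NormedAddCommGroup X] [NormedSpace ℝ X]
    (f : ℕ → X →L[ℝ] ℝ) (x : X) (Λ : Finset ℕ) : Prop :=
  ∀ n ∈ Λ, ∀ k ∉ Λ, |f k x| < |f n x| ∨ (|f k x| = |f n x| ∧ n < k)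

section Convexity

variable {X : Type*} [NormedAddCommGroup X] [NormedSpace ℝ X]

theorem norm_add_smul_le_of_norm_add_le_of_norm_sub_le {u v : X} {M t : ℝ}
    (hadd : ‖u + v‖ ≤ M) (hsub : ‖u - v‖ ≤ M) (ht : |t| ≤ 1) : ‖u + t • v‖ ≤ M := by
  obtain ⟨ht₁, ht₂⟩ := abs_le.mp ht
  have hconv : u + t • v = ((1 + t) / 2) • (u + v) + ((1 - t) / 2) • (u - v) := by module
  calc ‖u + t • v‖ ≤ ((1 + t) / 2) * ‖u + v‖ + ((1 - t) / 2) * ‖u - v‖ := by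
        rw [hconv]
        refine (norm_add_le _ _).trans_eq ?_
        rw [norm_smul, norm_smul, Real.norm_of_nonneg (by linarith),
          Real.norm_of_nonneg (by linarith)]
    _ ≤ ((1 + t) / 2) * M + ((1 - t) / 2) * M := by gcongr; linarith
    _ = M := by ring

theorem norm_add_sum_smul_le_of_forall_signs {ι : Type*} [DecidableEq ι] (e : ι → X) {M : ℝ}
    (A : Finset ι) (w : X) {z : ι → ℝ} (hz : ∀ n ∈ A, |z n| ≤ 1)
    (hsigns : ∀ ε : ι → ℝ, (∀ n ∈ A, ε n = 1 ∨ ε n = -1) → ‖w + ∑ n ∈ A, ε n • e n‖ ≤ M) :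
    ‖w + ∑ n ∈ A, z n • e n‖ ≤ M := by
  induction A using Finset.induction_on generalizing w with
  | empty => simpa using hsigns 0 (by simp)
  | @insert a s ha ih =>
    have hvertex : ∀ b : ℝ, b = 1 ∨ b = -1 → ‖(w + ∑ n ∈ s, z n • e n) + b • e a‖ ≤ M := by
      intro b hb
      rw [add_right_comm]
      refine ih (w + b • e a) (fun n hn => hz n (Finset.mem_insert_of_mem hn)) fun ε hε => ?_
      have hupdate := hsigns (Function.update ε a b) fun n hn => by
        rcases Finset.mem_insert.mp hn with rfl | hn
        · simpa using hb
        · simpa [ne_of_mem_of_not_mem hn ha] using hε n hn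
      rw [Finset.sum_insert ha, Function.update_self,
        Finset.sum_congr rfl fun n hn => by rw [Function.update_of_ne (ne_of_mem_of_not_mem hn ha)],
        ← add_assoc] at hupdate
      exact hupdate
    rw [Finset.sum_insert ha, add_left_comm, add_comm]
    refine norm_add_smul_le_of_norm_add_le_of_norm_sub_le (by simpa using hvertex 1 (.inl rfl))
      (by simpa [sub_eq_add_neg] using hvertex (-1) (.inr rfl)) (hz a (Finset.mem_insert_self a s))

end Convexity

section Basis

variable {X : Type*} [NormedAddCommGroup X] [NormedSpace ℝ X] (e : ℕ → X)

theorem vec_eq_linearCombination : vec e = Finsupp.linearCombination ℝ e := by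
  funext c
  rw [Finsupp.linearCombination_apply]
  rfl

theorem vec_eq_sum_of_support_subset {c : ℕ →₀ ℝ} {s : Finset ℕ} (hs : c.support ⊆ s) :
    vec e c = ∑ n ∈ s, c n • e n :=
  Finset.sum_subset hs fun n _ hn => by rw [Finsupp.notMem_support_iff.mp hn, zero_smul]

theorem vec_indicator (s : Finset ℕ) (g : ℕ → ℝ) :
    vec e (Finsupp.indicator s fun n _ => g n) = ∑ n ∈ s, g n • e n := by
  rw [vec_eq_sum_of_support_subset e (Finsupp.support_indicator_subset _ _)]
  exact Finset.sum_congr rfl fun n hn => by rw [Finsupp.indicator_of_mem hn]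

variable {e} {f : ℕ → X →L[ℝ] ℝ}

theorem apply_vec (hbi : ∀ m n, f m (e n) = if m = n then 1 else 0) (c : ℕ →₀ ℝ) (k : ℕ) :
    f k (vec e c) = c k := by
  classical
  simp [vec, hbi, eq_comm]

theorem ne_zero_of_biorthogonal (hbi : ∀ m n, f m (e n) = if m = n then 1 else 0) (n : ℕ) :
    e n ≠ 0 := by
  intro h
  simpa [h] using hbi n n

theorem isGreedySet_vec_add (hbi : ∀ m n, f m (e n) = if m = n then 1 else 0)
    {u w : ℕ →₀ ℝ} {Λ : Finset ℕ} (hu : ∀ n, |u n| ≤ 1) (huΛ : ∀ n ∈ Λ, u n = 0)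
    (hw : ∀ n ∈ Λ, 1 < |w n|) (hwΛ : ∀ n ∉ Λ, w n = 0) :
    IsGreedySet f (vec e (u + w)) Λ := fun n hn k hk => .inl <| by
  simpa [apply_vec hbi, huΛ n hn, hwΛ k hk] using (hu k).trans_lt (hw n hn)

theorem vec_add_sub_sum_eq (hbi : ∀ m n, f m (e n) = if m = n then 1 else 0)
    {u w : ℕ →₀ ℝ} {Λ : Finset ℕ} (huΛ : ∀ n ∈ Λ, u n = 0) (hwΛ : ∀ n ∉ Λ, w n = 0) :
    vec e (u + w) - ∑ n ∈ Λ, f n (vec e (u + w)) • e n = vec e u := by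
  have hw : vec e w = ∑ n ∈ Λ, f n (vec e (u + w)) • e n := by
    rw [vec_eq_sum_of_support_subset e fun n hn =>
      not_imp_comm.mp (hwΛ n) (Finsupp.mem_support_iff.mp hn)]
    exact Finset.sum_congr rfl fun n hn => by simp [apply_vec hbi, huΛ n hn]
  rw [← hw, vec_eq_linearCombination, map_add, add_sub_cancel_right]

end Basis

section DStar

variable {X : Type*} [NormedAddCommGroup X] [NormedSpace ℝ X]

/-- The paper's `D*_m(x)`. -/
noncomputable def dStar (e : ℕ → X) (x : X) (m : ℕ) : ℝ :=
  sInf {d : ℝ | ∃ (A : Finset ℕ) (ε : ℕ → ℝ) (α : ℝ), A.card = m ∧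
    (∀ n ∈ A, ε n = 1 ∨ ε n = -1) ∧ d = ‖x - α • ∑ n ∈ A, ε n • e n‖}

variable {e : ℕ → X} {x : X} {m : ℕ}

theorem dStar_nonneg : 0 ≤ dStar e x m :=
  Real.sInf_nonneg <| by rintro _ ⟨A, ε, α, -, -, rfl⟩; exact norm_nonneg _

theorem dStar_le {A : Finset ℕ} {ε : ℕ → ℝ} (hA : A.card = m)
    (hε : ∀ n ∈ A, ε n = 1 ∨ ε n = -1) (α : ℝ) :
    dStar e x m ≤ ‖x - α • ∑ n ∈ A, ε n • e n‖ :=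
  csInf_le ⟨0, by rintro _ ⟨A, ε, α, -, -, rfl⟩; exact norm_nonneg _⟩ ⟨A, ε, α, hA, hε, rfl⟩

theorem nonneg_of_greedy_bound {f : ℕ → X →L[ℝ] ℝ} {C : ℝ}
    (hG : ∀ (x : X) (m : ℕ) (Λ : Finset ℕ), Λ.card = m → IsGreedySet f x Λ →
      ‖x - ∑ n ∈ Λ, f n x • e n‖ ≤ C * dStar e x m) (hx : x ≠ 0) : 0 ≤ C := by
  have hbound := hG x 0 ∅ rfl (by simp [IsGreedySet])
  rw [Finset.sum_empty, sub_zero] at hbound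
  exact (pos_of_mul_pos_left ((norm_pos_iff.mpr hx).trans_le hbound) dStar_nonneg).le

theorem norm_vec_le_of_greedy_split {f : ℕ → X →L[ℝ] ℝ} {C : ℝ}
    (hbi : ∀ m n, f m (e n) = if m = n then 1 else 0) (hC : 0 ≤ C)
    (hG : ∀ (x : X) (m : ℕ) (Λ : Finset ℕ), Λ.card = m → IsGreedySet f x Λ →
      ‖x - ∑ n ∈ Λ, f n x • e n‖ ≤ C * dStar e x m)
    {u w : ℕ →₀ ℝ} {Λ A : Finset ℕ} {ε : ℕ → ℝ} (hu : ∀ n, |u n| ≤ 1) (huΛ : ∀ n ∈ Λ, u n = 0)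
    (hw : ∀ n ∈ Λ, 1 < |w n|) (hwΛ : ∀ n ∉ Λ, w n = 0) (hA : A.card = Λ.card)
    (hε : ∀ n ∈ A, ε n = 1 ∨ ε n = -1) :
    ‖vec e u‖ ≤ C * ‖vec e (u + w) - ∑ n ∈ A, ε n • e n‖ :=
  calc ‖vec e u‖ = ‖vec e (u + w) - ∑ n ∈ Λ, f n (vec e (u + w)) • e n‖ := by
        rw [vec_add_sub_sum_eq hbi huΛ hwΛ]
    _ ≤ C * dStar e (vec e (u + w)) Λ.card :=
        hG _ _ _ rfl (isGreedySet_vec_add hbi hu huΛ hw hwΛ)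
    _ ≤ C * ‖vec e (u + w) - ∑ n ∈ A, ε n • e n‖ := by
        gcongr
        simpa using dStar_le hA hε 1

end DStar

theorem abs_add_indicator_le_one {c : ℕ →₀ ℝ} {Z : Finset ℕ} {ε : ℕ → ℝ}
    (hcZ : Disjoint c.support Z) (hc : ∀ n, |c n| ≤ 1) (hε : ∀ n ∈ Z, ε n = 1 ∨ ε n = -1)
    (n : ℕ) : |(c + Finsupp.indicator Z fun n _ => ε n) n| ≤ 1 := by
  by_cases hn : n ∈ Z
  · have hcn : c n = 0 := Finsupp.notMem_support_iff.mp (Finset.disjoint_right.mp hcZ hn)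
    rcases hε n hn with h | h <;> simp [hn, h, hcn]
  · simpa [hn] using hc n

theorem Finset.card_union_sdiff_of_card_eq {α : Type*} [DecidableEq α] {Z F B : Finset α}
    (hZF : Disjoint Z F) (hBF : B ⊆ F) (hBZ : B.card = Z.card) :
    (Z ∪ (F \ B)).card = F.card := by
  rw [Finset.card_union_of_disjoint (hZF.mono_right Finset.sdiff_subset),
    Finset.card_sdiff_of_subset hBF, ← hBZ]
  have := Finset.card_le_card hBF
  omega

theorem Real.abs_add_sign_of_ne_zero {r : ℝ} (hr : r ≠ 0) : |r + Real.sign r| = |r| + 1 := by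
  rcases hr.lt_or_gt with hr | hr
  · rw [Real.sign_of_neg hr, abs_of_neg hr, abs_of_neg (by linarith)]
    ring
  · rw [Real.sign_of_pos hr, abs_of_pos hr, abs_of_pos (by linarith)]

section QStar

variable {X : Type*} [NormedAddCommGroup X] [NormedSpace ℝ X] {e : ℕ → X}
  {f : ℕ → X →L[ℝ] ℝ} {C : ℝ} {c y : ℕ →₀ ℝ} {Z : Finset ℕ} {ε : ℕ → ℝ}

theorem norm_vec_add_sum_signs_le_add (hbi : ∀ m n, f m (e n) = if m = n then 1 else 0)
    (hC : 0 ≤ C) (hG : ∀ (x : X) (m : ℕ) (Λ : Finset ℕ), Λ.card = m → IsGreedySet f x Λ →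
      ‖x - ∑ n ∈ Λ, f n x • e n‖ ≤ C * dStar e x m)
    (hcZ : Disjoint c.support Z) (hcy : Disjoint c.support y.support)
    (hZy : Disjoint Z y.support) (hc : ∀ n, |c n| ≤ 1) {B : Finset ℕ} (hBy : B ⊆ y.support)
    (hB1 : ∀ n ∈ B, |y n| = 1) (hBZ : B.card = Z.card) (hε : ∀ n ∈ Z, ε n = 1 ∨ ε n = -1)
    {δ : ℝ} (hδ : 0 < δ) :
    ‖vec e c + ∑ n ∈ Z, ε n • e n‖ ≤
      C * (‖vec e c + vec e y‖ + δ * ‖∑ n ∈ B, y n • e n‖) := by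
  classical
  set F := y.support
  set u : ℕ →₀ ℝ := c + Finsupp.indicator Z fun n _ => ε n
  set w : ℕ →₀ ℝ := Finsupp.indicator F fun n _ =>
    if n ∈ B then (1 + δ) * y n else y n + Real.sign (y n)
  set A := Z ∪ (F \ B)
  set ε' : ℕ → ℝ := fun n => if n ∈ Z then ε n else Real.sign (y n)
  have hc0 : ∀ n ∉ c.support, c n = 0 := fun n => Finsupp.notMem_support_iff.mp
  have hy0 : ∀ n ∉ F, y n = 0 := fun n => Finsupp.notMem_support_iff.mp
  have huF : ∀ n ∈ F, u n = 0 := fun n hn => by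
    simp [u, Finset.disjoint_right.mp hZy hn, hc0 n (Finset.disjoint_right.mp hcy hn)]
  have hw : ∀ n ∈ F, 1 < |w n| := by
    intro n hn
    have hyn : y n ≠ 0 := Finsupp.mem_support_iff.mp hn
    by_cases hnB : n ∈ B
    · simp [w, hn, hnB, abs_mul, abs_of_pos (by linarith : 0 < 1 + δ), hB1 n hnB, hδ]
    · simp [w, hn, hnB, Real.abs_add_sign_of_ne_zero hyn, abs_pos.mpr hyn]
  have hwF : ∀ n ∉ F, w n = 0 := fun n hn => Finsupp.indicator_of_notMem hn _
  have hε' : ∀ n ∈ A, ε' n = 1 ∨ ε' n = -1 := by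
    intro n hn
    by_cases hnZ : n ∈ Z
    · simpa [ε', hnZ] using hε n hnZ
    · have hnF : n ∈ F := by simp_all [A]
      simpa [ε', hnZ, or_comm] using
        Real.sign_apply_eq_of_ne_zero _ (Finsupp.mem_support_iff.mp hnF)
  have hresidual : u + w - Finsupp.indicator A (fun n _ => ε' n) =
      c + y + δ • Finsupp.indicator B fun n _ => y n := by
    ext n
    by_cases hnZ : n ∈ Z
    · have hnF : n ∉ F := Finset.disjoint_left.mp hZy hnZ
      simp [u, w, A, ε', hnZ, hnF, hc0 n (Finset.disjoint_right.mp hcZ hnZ), hy0 n hnF]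
    by_cases hnF : n ∈ F
    · have := hc0 n (Finset.disjoint_right.mp hcy hnF)
      by_cases hnB : n ∈ B
      · simp [u, w, A, ε', hnZ, hnF, hnB, this]
        ring
      · simp [u, w, A, ε', hnZ, hnF, hnB, this]
    · simp [u, w, A, ε', hnZ, hnF, hy0 n hnF]
  calc ‖vec e c + ∑ n ∈ Z, ε n • e n‖ = ‖vec e u‖ := by
        rw [vec_eq_linearCombination, map_add, ← vec_eq_linearCombination, vec_indicator]
    _ ≤ C * ‖vec e (u + w) - ∑ n ∈ A, ε' n • e n‖ :=
        norm_vec_le_of_greedy_split hbi hC hG (abs_add_indicator_le_one hcZ hc hε) huF hw hwF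
          (Finset.card_union_sdiff_of_card_eq hZy hBy hBZ) hε'
    _ = C * ‖vec e c + vec e y + δ • ∑ n ∈ B, y n • e n‖ := by
        rw [← vec_indicator, ← vec_indicator, vec_eq_linearCombination, ← map_sub,
          hresidual, map_add, map_add, map_smul]
    _ ≤ C * (‖vec e c + vec e y‖ + δ * ‖∑ n ∈ B, y n • e n‖) := by
        gcongr
        refine (norm_add_le _ _).trans_eq ?_
        rw [norm_smul, Real.norm_of_nonneg hδ.le]

theorem norm_vec_add_sum_signs_le (hbi : ∀ m n, f m (e n) = if m = n then 1 else 0)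
    (hC : 0 ≤ C) (hG : ∀ (x : X) (m : ℕ) (Λ : Finset ℕ), Λ.card = m → IsGreedySet f x Λ →
      ‖x - ∑ n ∈ Λ, f n x • e n‖ ≤ C * dStar e x m)
    (hcZ : Disjoint c.support Z) (hcy : Disjoint c.support y.support)
    (hZy : Disjoint Z y.support) (hc : ∀ n, |c n| ≤ 1)
    (hcard : Z.card ≤ (y.support.filter fun n => |y n| = 1).card)
    (hε : ∀ n ∈ Z, ε n = 1 ∨ ε n = -1) :
    ‖vec e c + ∑ n ∈ Z, ε n • e n‖ ≤ C * ‖vec e c + vec e y‖ := by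
  obtain ⟨B, hBsub, hBZ⟩ := Finset.exists_subset_card_eq hcard
  have hBy : B ⊆ y.support := hBsub.trans (Finset.filter_subset _ _)
  have hB1 : ∀ n ∈ B, |y n| = 1 := fun n hn => (Finset.mem_filter.mp (hBsub hn)).2
  have hlim : Tendsto (fun δ => C * (‖vec e c + vec e y‖ + δ * ‖∑ n ∈ B, y n • e n‖))
      (nhdsWithin 0 (Set.Ioi 0)) (nhds (C * (‖vec e c + vec e y‖ + 0 * ‖∑ n ∈ B, y n • e n‖))) :=
    (Continuous.tendsto (by fun_prop) 0).mono_left nhdsWithin_le_nhds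
  simpa using ge_of_tendsto hlim <| eventually_nhdsWithin_of_forall fun δ hδ =>
    norm_vec_add_sum_signs_le_add hbi hC hG hcZ hcy hZy hc hBy hB1 hBZ hε hδ

end QStar

theorem stmt_19_general {X : Type*} [NormedAddCommGroup X] [NormedSpace ℝ X]
    (e : ℕ → X) (f : ℕ → X →L[ℝ] ℝ)
    (hbi : ∀ m n : ℕ, f m (e n) = if m = n then 1 else 0)
    (C : ℝ)
    (hG : ∀ (x : X) (m : ℕ) (Λ : Finset ℕ), Λ.card = m → IsGreedySet f x Λ →
      ‖x - ∑ n ∈ Λ, f n x • e n‖ ≤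
        C * sInf {d : ℝ | ∃ (A : Finset ℕ) (ε : ℕ → ℝ) (α : ℝ), A.card = m ∧
          (∀ n ∈ A, ε n = 1 ∨ ε n = -1) ∧ d = ‖x - α • ∑ n ∈ A, ε n • e n‖}) :
    PropQstar e C := by
  have hC : 0 ≤ C := nonneg_of_greedy_bound hG (ne_zero_of_biorthogonal hbi 0)
  intro c z y hcz hcy hzy hc hz hcard
  exact norm_add_sum_smul_le_of_forall_signs e z.support (vec e c) (fun n _ => hz n)
    fun ε hε => norm_vec_add_sum_signs_le hbi hC hG hcz hcy hzy hc hcard hε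

/-- Theorem 3.6 (i): if `‖x - G_m(x)‖ ≤ C D*_m(x)` for all `x` and `m`, then the basis has
Property (Q*) with constant `C`. -/
theorem stmt_19 {X : Type*} [NormedAddCommGroup X] [NormedSpace ℝ X] [CompleteSpace X]
    (e : ℕ → X) (f : ℕ → X →L[ℝ] ℝ)
    (hbi : ∀ m n : ℕ, f m (e n) = if m = n then 1 else 0)
    (hexp : ∀ z : X, Tendsto (fun N => ∑ n ∈ Finset.range N, f n z • e n) atTop (nhds z))
    (C : ℝ)
    (hG : ∀ (x : X) (m : ℕ) (Λ : Finset ℕ), Λ.card = m → IsGreedySet f x Λ →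
      ‖x - ∑ n ∈ Λ, f n x • e n‖ ≤
        C * sInf {d : ℝ | ∃ (A : Finset ℕ) (ε : ℕ → ℝ) (α : ℝ), A.card = m ∧
          (∀ n ∈ A, ε n = 1 ∨ ε n = -1) ∧ d = ‖x - α • ∑ n ∈ A, ε n • e n‖}) :
    PropQstar e C :=
  stmt_19_general e f hbi C hG
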